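/- If p cops play the one-proximity game on a finite graph G and p·(Δ(G)+1) ≤ H_V(G) with H_V(G) ≥ Δ(G)+1, then for the contamination sets S_t defined by any cop probe sequence, S_t is nonempty for all t; in particular prox_1(G) > H_V(G)/(Δ(G)+1). -/

import Mathlib

open scoped Classical
open Finset

variable {V : Type*}

/-- External vertex boundary: vertices outside `S` adjacent to some vertex of `S`. -/
noncomputable def vBoundary [Fintype V] (G : SimpleGraph V) (S : Finset V) : Finset V :=
  Finset.univ.filter fun v => v ∉ S ∧ ∃ u ∈ S, G.Adj u v

/-- Vertex isoperimetric number `Φ_V(G,k)`. -/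
noncomputable def PhiV [Fintype V] (G : SimpleGraph V) (k : ℕ) : ℕ :=
  sInf {m | ∃ S : Finset V, S.card = k ∧ (vBoundary G S).card = m}

/-- Number of edges with exactly one endpoint in `S`. -/
noncomputable def edgeBoundaryCard [Fintype V] (G : SimpleGraph V) (S : Finset V) : ℕ :=
  (Finset.univ.filter fun p : V × V => p.1 ∈ S ∧ p.2 ∉ S ∧ G.Adj p.1 p.2).card

/-- Edge isoperimetric number `Φ_E(G,k)`. -/
noncomputable def PhiE [Fintype V] (G : SimpleGraph V) (k : ℕ) : ℕ :=
  sInf {m | ∃ S : Finset V, S.card = k ∧ edgeBoundaryCard G S = m}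

/-- Vertex isoperimetric peak `Φ_V(G)`. -/
noncomputable def PhiVPeak [Fintype V] (G : SimpleGraph V) : ℕ :=
  (Finset.Icc 1 (Fintype.card V)).sup (PhiV G)

/-- Edge isoperimetric peak `Φ_E(G)`. -/
noncomputable def PhiEPeak [Fintype V] (G : SimpleGraph V) : ℕ :=
  (Finset.Icc 1 (Fintype.card V)).sup (PhiE G)

/-- The h-index of a function `f : ℕ → ℕ`: the largest `h` such that `f k ≥ h`
for `h` consecutive values `k1 ≤ k ≤ k1 + h - 1`. -/
noncomputable def hIndex (f : ℕ → ℕ) : ℕ :=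
  sSup {h : ℕ | ∃ k1 : ℕ, ∀ k, k1 ≤ k → k < k1 + h → h ≤ f k}
/-- Closed neighborhood of `v` as a finset. -/
noncomputable def closedNbr [Fintype V] (G : SimpleGraph V) (v : V) : Finset V :=
  insert v (Finset.univ.filter (G.Adj v))

/-- Contamination sets of the single-player one-proximity game: `contam G P t`
is the set of possible robber locations after the cops' `(t+1)`-st move, where
the cops probe the vertices `P t` in round `t+1` (0-indexed).  Initially every
vertex is contaminated; a cop probe at `v` clears `N[v]`, and between cop moves
the contamination spreads to the boundary. -/
noncomputable def contam [Fintype V] (G : SimpleGraph V) (P : ℕ → Finset V) :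
    ℕ → Finset V
  | 0 => Finset.univ \ (P 0).biUnion (closedNbr G)
  | t + 1 =>
      (contam G P t ∪ vBoundary G (contam G P t)) \ (P (t + 1)).biUnion (closedNbr G)

/-- `p` cops win the one-proximity game (contamination model): some sequence of
probe sets of size at most `p` clears all contamination. -/
def ProxWinsSets [Fintype V] (G : SimpleGraph V) (p : ℕ) : Prop :=
  ∃ P : ℕ → Finset V, (∀ t, (P t).card ≤ p) ∧ ∃ t, contam G P t = ∅

/-- The one-proximity number `prox₁(G)`. -/
noncomputable def prox1 [Fintype V] (G : SimpleGraph V) : ℕ :=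
  sInf {p | ProxWinsSets G p}

/-!
The `h`-index of `Φ_V` provides a window `k₁ ≤ k < k₁ + H` of sizes on which every set has at
least `H` boundary vertices; since `Φ_V` vanishes at `0` and at `|V|`, the window lies strictly
between them. As long as the contamination has size in the window it gains at least `H` new
vertices per round, while `p` probes clear at most `p (Δ + 1) ≤ H`; above the window it can
lose at most `H`. Either way its size never drops below `k₁ ≥ 1`. Since `|V|` cops always win,
`prox₁(G)` cops win too, which forces `prox₁(G) (Δ + 1) > H`.
-/

theorem hIndex_window_of_le {f : ℕ → ℕ} {B : ℕ} (hf : ∀ k, f k ≤ B) :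
    ∃ k₁, ∀ k, k₁ ≤ k → k < k₁ + hIndex f → hIndex f ≤ f k := by
  refine Nat.sSup_mem (s := {h | ∃ k₁, ∀ k, k₁ ≤ k → k < k₁ + h → h ≤ f k})
    ⟨0, 0, fun _ _ h => absurd h (by omega)⟩ ⟨B, ?_⟩
  rintro h ⟨k₁, hk₁⟩
  rcases Nat.eq_zero_or_pos h with rfl | hpos
  · exact Nat.zero_le B
  · exact (hk₁ k₁ le_rfl (by omega)).trans (hf k₁)

section Graph

variable [Fintype V] (G : SimpleGraph V)

theorem disjoint_vBoundary (S : Finset V) : Disjoint S (vBoundary G S) :=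
  Finset.disjoint_left.mpr fun _ hv hv' => (Finset.mem_filter.mp hv').2.1 hv

theorem vBoundary_empty : vBoundary G ∅ = ∅ := by
  ext v; simp [vBoundary]

theorem vBoundary_univ : vBoundary G univ = ∅ := by
  ext v; simp [vBoundary]

theorem phiV_le_card_vBoundary {k : ℕ} {S : Finset V} (hS : S.card = k) :
    PhiV G k ≤ (vBoundary G S).card :=
  Nat.sInf_le ⟨S, hS, rfl⟩

theorem phiV_eq_zero_of_card_lt {k : ℕ} (hk : Fintype.card V < k) : PhiV G k = 0 := by
  have hempty : {m | ∃ S : Finset V, S.card = k ∧ (vBoundary G S).card = m} = ∅ :=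
    Set.eq_empty_of_forall_notMem fun _ ⟨S, hS, _⟩ => by
      have := S.card_le_univ
      omega
  simp [PhiV, hempty]

theorem phiV_le_card (k : ℕ) : PhiV G k ≤ Fintype.card V := by
  rcases le_or_gt k (Fintype.card V) with hk | hk
  · obtain ⟨S, -, hS⟩ := Finset.exists_subset_card_eq (s := univ) (by simpa using hk)
    exact (phiV_le_card_vBoundary G hS).trans (card_le_univ _)
  · simp [phiV_eq_zero_of_card_lt G hk]

theorem pos_and_lt_card_of_phiV_ne_zero {k : ℕ} (hk : PhiV G k ≠ 0) :
    0 < k ∧ k < Fintype.card V := by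
  refine ⟨Nat.pos_of_ne_zero fun h => hk ?_, lt_of_not_ge fun h => hk ?_⟩
  · subst h
    simpa [vBoundary_empty] using phiV_le_card_vBoundary G (S := ∅) rfl
  · rcases h.eq_or_lt with h | h
    · subst h
      simpa [vBoundary_univ] using phiV_le_card_vBoundary G (S := univ) card_univ
    · exact phiV_eq_zero_of_card_lt G h

theorem pos_and_add_le_card_of_le_phiV {k₁ h : ℕ} (hh : 0 < h)
    (hwindow : ∀ k, k₁ ≤ k → k < k₁ + h → h ≤ PhiV G k) :
    0 < k₁ ∧ k₁ + h ≤ Fintype.card V := by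
  have hfirst := hwindow k₁ le_rfl (by omega)
  have hlast := hwindow (k₁ + h - 1) (by omega) (by omega)
  have := (pos_and_lt_card_of_phiV_ne_zero G (k := k₁) (by omega)).1
  have := (pos_and_lt_card_of_phiV_ne_zero G (k := k₁ + h - 1) (by omega)).2
  omega

theorem card_closedNbr_le (v : V) : (closedNbr G v).card ≤ G.maxDegree + 1 := by
  have hnbr : univ.filter (G.Adj v) = G.neighborFinset v := by
    ext u; simp
  calc (closedNbr G v).card ≤ (univ.filter (G.Adj v)).card + 1 := card_insert_le _ _
    _ = G.degree v + 1 := by rw [hnbr, SimpleGraph.card_neighborFinset_eq_degree]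
    _ ≤ G.maxDegree + 1 := by grw [G.degree_le_maxDegree v]

theorem card_biUnion_closedNbr_le (Q : Finset V) :
    (Q.biUnion (closedNbr G)).card ≤ Q.card * (G.maxDegree + 1) :=
  card_biUnion_le_card_mul _ _ _ fun v _ => card_closedNbr_le G v

theorem le_card_contam {P : ℕ → Finset V} {k₁ h : ℕ}
    (hwindow : ∀ S : Finset V, k₁ ≤ S.card → S.card < k₁ + h → h ≤ (vBoundary G S).card)
    (hfits : k₁ + h ≤ Fintype.card V) (hprobe : ∀ t, ((P t).biUnion (closedNbr G)).card ≤ h) :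
    ∀ t, k₁ ≤ (contam G P t).card := by
  intro t
  induction t with
  | zero =>
    have hcard : (contam G P 0).card = Fintype.card V - ((P 0).biUnion (closedNbr G)).card := by
      rw [contam, card_sdiff_of_subset (subset_univ _), card_univ]
    have := hprobe 0
    omega
  | succ t ih =>
    set S := contam G P t
    have hspread : (S ∪ vBoundary G S).card = S.card + (vBoundary G S).card :=
      card_union_of_disjoint (disjoint_vBoundary G S)
    have hclear : (S ∪ vBoundary G S).card - ((P (t + 1)).biUnion (closedNbr G)).card ≤
        (contam G P (t + 1)).card := le_card_sdiff _ _
    have := hprobe (t + 1)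
    rcases lt_or_ge S.card (k₁ + h) with hS | hS
    · have := hwindow S ih hS
      omega
    · omega

theorem proxWinsSets_card : ProxWinsSets G (Fintype.card V) := by
  refine ⟨fun _ => univ, fun _ => card_univ.le, 0, ?_⟩
  rw [contam, sdiff_eq_empty_iff_subset]
  exact fun v _ => mem_biUnion.mpr ⟨v, mem_univ v, mem_insert_self _ _⟩

theorem proxWinsSets_prox1 : ProxWinsSets G (prox1 G) :=
  Nat.sInf_mem (s := {p | ProxWinsSets G p}) ⟨_, proxWinsSets_card G⟩

end Graph

theorem prox1_gt_hIndexV_div_general [Fintype V] (G : SimpleGraph V)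
    (hH : G.maxDegree + 1 ≤ hIndex (PhiV G)) :
    (∀ p : ℕ, p * (G.maxDegree + 1) ≤ hIndex (PhiV G) →
      ∀ P : ℕ → Finset V, (∀ s, (P s).card ≤ p) →
        ∀ t, (contam G P t).Nonempty) ∧
    (hIndex (PhiV G) : ℚ) / (G.maxDegree + 1) < prox1 G := by
  set H := hIndex (PhiV G)
  obtain ⟨k₁, hk₁⟩ := hIndex_window_of_le (phiV_le_card G)
  obtain ⟨hpos, hfits⟩ := pos_and_add_le_card_of_le_phiV G (by omega) hk₁
  have hsurvive : ∀ p : ℕ, p * (G.maxDegree + 1) ≤ H →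
      ∀ P : ℕ → Finset V, (∀ s, (P s).card ≤ p) → ∀ t, (contam G P t).Nonempty :=
    fun p hp P hP t => card_pos.mp <| hpos.trans_le <| le_card_contam G
      (fun S hlo hhi => (hk₁ _ hlo hhi).trans (phiV_le_card_vBoundary G rfl)) hfits
      (fun t => (card_biUnion_closedNbr_le G _).trans
        ((Nat.mul_le_mul_right _ (hP t)).trans hp)) t
  refine ⟨hsurvive, ?_⟩
  obtain ⟨P, hP, t, hclear⟩ := proxWinsSets_prox1 G
  have hlt : H < prox1 G * (G.maxDegree + 1) := lt_of_not_ge fun hle =>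
    (hsurvive _ hle P hP t).ne_empty hclear
  rw [div_lt_iff₀ (by positivity)]
  exact_mod_cast hlt

/-- If `p·(Δ(G)+1) ≤ H_V(G)` and `H_V(G) ≥ Δ(G)+1`, then no sequence of probe
sets of size at most `p` ever clears all contamination; in particular
`prox₁(G) > H_V(G)/(Δ(G)+1)`. -/
theorem prox1_gt_hIndexV_div [Fintype V] (G : SimpleGraph V)
    (hG : G.Connected) (hH : G.maxDegree + 1 ≤ hIndex (PhiV G)) :
    (∀ p : ℕ, p * (G.maxDegree + 1) ≤ hIndex (PhiV G) →
      ∀ P : ℕ → Finset V, (∀ s, (P s).card ≤ p) →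
        ∀ t, (contam G P t).Nonempty) ∧
    (hIndex (PhiV G) : ℚ) / (G.maxDegree + 1) < prox1 G :=
  prox1_gt_hIndexV_div_general G hH
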